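/- The set of proper filters of an inverse semigroup S forms a groupoid under the partial operation A·B = (AB)↑ defined when d(A) = r(B); the identities of this groupoid are exactly the proper filters containing an idempotent. -/

import Mathlib

/-- An inverse semigroup with zero: associative multiplication, unique
generalized inverses, and a multiplicatively absorbing zero. -/
structure InvSemigroupZero (S : Type*) [Mul S] [Inv S] [Zero S] : Prop where
  mul_assoc : ∀ a b c : S, a * b * c = a * (b * c)
  mul_inv_mul : ∀ a : S, a * a⁻¹ * a = a
  inv_mul_inv : ∀ a : S, a⁻¹ * a * a⁻¹ = a⁻¹
  inv_unique : ∀ a t : S, a * t * a = a → t * a * t = t → t = a⁻¹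
  zero_mul : ∀ a : S, 0 * a = 0
  mul_zero : ∀ a : S, a * 0 = 0

def IsIdem {S : Type*} [Mul S] (e : S) : Prop := e * e = e

/-- The natural partial order: `s ≤ t` iff `s = t e` for some idempotent `e`. -/
def natLe {S : Type*} [Mul S] (s t : S) : Prop := ∃ e : S, IsIdem e ∧ s = t * e

/-- `s` and `t` are compatible iff `s⁻¹ t` and `s t⁻¹` are idempotents. -/
def Compat {S : Type*} [Mul S] [Inv S] (s t : S) : Prop :=
  IsIdem (s⁻¹ * t) ∧ IsIdem (s * t⁻¹)

/-- Upward closure of a subset in the natural partial order. -/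
def upc {S : Type*} [Mul S] (X : Set S) : Set S := {s | ∃ x ∈ X, natLe x s}

/-- A filter: nonempty, upward closed and downward directed. -/
def IsFilt {S : Type*} [Mul S] (A : Set S) : Prop :=
  A.Nonempty ∧ (∀ a ∈ A, ∀ s, natLe a s → s ∈ A) ∧
    ∀ a ∈ A, ∀ b ∈ A, ∃ c ∈ A, natLe c a ∧ natLe c b

/-- A proper filter: a filter not containing `0`. -/
def IsPFilt {S : Type*} [Mul S] [Zero S] (A : Set S) : Prop := IsFilt A ∧ (0 : S) ∉ A

def dF {S : Type*} [Mul S] [Inv S] (A : Set S) : Set S :=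
  upc {p | ∃ a ∈ A, ∃ b ∈ A, p = a⁻¹ * b}

def rF {S : Type*} [Mul S] [Inv S] (A : Set S) : Set S :=
  upc {p | ∃ a ∈ A, ∃ b ∈ A, p = a * b⁻¹}

def invF {S : Type*} [Inv S] (A : Set S) : Set S := Inv.inv '' A

def mulF {S : Type*} [Mul S] (A B : Set S) : Set S :=
  upc {p | ∃ a ∈ A, ∃ b ∈ B, p = a * b}

/-- An ultrafilter: a maximal proper filter. -/
def IsUltraF {S : Type*} [Mul S] [Zero S] (A : Set S) : Prop :=
  IsPFilt A ∧ ∀ B : Set S, IsPFilt B → A ⊆ B → A = B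

/-! Everything reduces to the calculus of the set operations: `(XY)↑` is associative and is
reversed by inversion, `d(A) = (A⁻¹A)↑` and `r(A) = (AA⁻¹)↑`. For a filter `A`, directedness
gives `A·d(A) = A`, since a common lower bound `c` of `x, a, b ∈ A` satisfies
`c = c(c⁻¹c) ≤ x(a⁻¹b)`, and inverting gives `r(A)·A = A`; hence
`d(AB) = (B⁻¹(A⁻¹A)B)↑ = (B⁻¹r(B)B)↑ = d(B)`. A filter containing an idempotent has idempotents
below all of its elements, so it is closed under inversion and equal to its own square. -/

theorem mem_mulF {S : Type*} [Mul S] {X Y : Set S} {p : S} :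
    p ∈ mulF X Y ↔ ∃ a ∈ X, ∃ b ∈ Y, natLe (a * b) p := by
  simp only [mulF, upc, Set.mem_ofPred_eq]
  constructor
  · rintro ⟨_, ⟨a, ha, b, hb, rfl⟩, hle⟩
    exact ⟨a, ha, b, hb, hle⟩
  · rintro ⟨a, ha, b, hb, hle⟩
    exact ⟨a * b, ⟨a, ha, b, hb, rfl⟩, hle⟩

theorem dF_eq_mulF_invF {S : Type*} [Mul S] [Inv S] (A : Set S) : dF A = mulF (invF A) A := by
  rw [dF, mulF]
  congr 1
  ext p
  simp [invF]

theorem rF_eq_mulF_invF {S : Type*} [Mul S] [Inv S] (A : Set S) : rF A = mulF A (invF A) := by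
  rw [rF, mulF]
  congr 1
  ext p
  simp [invF]

namespace InvSemigroupZero

variable {S : Type*} [Mul S] [Inv S] [Zero S]

theorem inv_inv (hS : InvSemigroupZero S) (a : S) : a⁻¹⁻¹ = a :=
  (hS.inv_unique a⁻¹ a (hS.inv_mul_inv a) (hS.mul_inv_mul a)).symm

theorem inv_zero (hS : InvSemigroupZero S) : (0 : S)⁻¹ = 0 :=
  (hS.inv_unique 0 0 (by simp only [hS.mul_zero]) (by simp only [hS.mul_zero])).symm

theorem inv_eq_self_of_isIdem (hS : InvSemigroupZero S) {e : S} (he : IsIdem e) : e⁻¹ = e :=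
  (hS.inv_unique e e (by rw [he, he]) (by rw [he, he])).symm

theorem isIdem_inv_mul (hS : InvSemigroupZero S) (a : S) : IsIdem (a⁻¹ * a) := by
  rw [IsIdem, ← hS.mul_assoc, hS.inv_mul_inv]

theorem isIdem_mul_inv (hS : InvSemigroupZero S) (a : S) : IsIdem (a * a⁻¹) := by
  rw [IsIdem, ← hS.mul_assoc, hS.mul_inv_mul]

/-- Uniqueness of inverses does the work: `f (ef)⁻¹ e` is an inverse of `ef`, hence equals
`(ef)⁻¹`, which makes `(ef)⁻¹` idempotent and so equal to its own inverse `ef`. -/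
theorem isIdem_mul (hS : InvSemigroupZero S) {e f : S} (he : IsIdem e) (hf : IsIdem f) :
    IsIdem (e * f) := by
  set x := (e * f)⁻¹
  have hx : f * x * e = x := by
    refine hS.inv_unique _ _ ?_ ?_
    · calc e * f * (f * x * e) * (e * f) = e * (f * f) * x * (e * e) * f := by
            simp only [hS.mul_assoc]
        _ = e * f * x * (e * f) := by rw [he, hf]; simp only [hS.mul_assoc]
        _ = e * f := hS.mul_inv_mul _
    · calc f * x * e * (e * f) * (f * x * e) = f * (x * (e * e * (f * f)) * x) * e := by
            simp only [hS.mul_assoc]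
        _ = f * x * e := by rw [he, hf, hS.inv_mul_inv]
  have hxx : IsIdem x := calc
    x * x = f * x * e * (f * x * e) := by rw [hx]
    _ = f * (x * (e * f) * x) * e := by simp only [hS.mul_assoc]
    _ = x := by rw [hS.inv_mul_inv, hx]
  have hef : e * f = x := calc
    e * f = x⁻¹ := (hS.inv_inv _).symm
    _ = x := hS.inv_eq_self_of_isIdem hxx
  rw [IsIdem, hef]
  exact hxx

theorem isIdem_comm (hS : InvSemigroupZero S) {e f : S} (he : IsIdem e) (hf : IsIdem f) :
    e * f = f * e := by
  have hfe : f * e = (e * f)⁻¹ := by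
    refine hS.inv_unique _ _ ?_ ?_
    · calc e * f * (f * e) * (e * f) = e * (f * f) * (e * e) * f := by simp only [hS.mul_assoc]
        _ = e * f * (e * f) := by rw [he, hf]; simp only [hS.mul_assoc]
        _ = e * f := hS.isIdem_mul he hf
    · calc f * e * (e * f) * (f * e) = f * (e * e) * (f * f) * e := by simp only [hS.mul_assoc]
        _ = f * e * (f * e) := by rw [he, hf]; simp only [hS.mul_assoc]
        _ = f * e := hS.isIdem_mul hf he
  rw [hfe, hS.inv_eq_self_of_isIdem (hS.isIdem_mul he hf)]

theorem mul_inv_rev (hS : InvSemigroupZero S) (a b : S) : (a * b)⁻¹ = b⁻¹ * a⁻¹ := by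
  refine (hS.inv_unique (a * b) (b⁻¹ * a⁻¹) ?_ ?_).symm
  · calc a * b * (b⁻¹ * a⁻¹) * (a * b) = a * (b * b⁻¹ * (a⁻¹ * a)) * b := by
          simp only [hS.mul_assoc]
      _ = a * (a⁻¹ * a * (b * b⁻¹)) * b := by
          rw [hS.isIdem_comm (hS.isIdem_mul_inv b) (hS.isIdem_inv_mul a)]
      _ = a * a⁻¹ * a * (b * b⁻¹ * b) := by simp only [hS.mul_assoc]
      _ = a * b := by rw [hS.mul_inv_mul, hS.mul_inv_mul]
  · calc b⁻¹ * a⁻¹ * (a * b) * (b⁻¹ * a⁻¹) = b⁻¹ * (a⁻¹ * a * (b * b⁻¹)) * a⁻¹ := by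
          simp only [hS.mul_assoc]
      _ = b⁻¹ * (b * b⁻¹ * (a⁻¹ * a)) * a⁻¹ := by
          rw [hS.isIdem_comm (hS.isIdem_inv_mul a) (hS.isIdem_mul_inv b)]
      _ = b⁻¹ * b * b⁻¹ * (a⁻¹ * a * a⁻¹) := by simp only [hS.mul_assoc]
      _ = b⁻¹ * a⁻¹ := by rw [hS.inv_mul_inv, hS.inv_mul_inv]

theorem isIdem_conj (hS : InvSemigroupZero S) (t : S) {f : S} (hf : IsIdem f) :
    IsIdem (t⁻¹ * f * t) := calc
  t⁻¹ * f * t * (t⁻¹ * f * t) = t⁻¹ * (f * (t * t⁻¹) * f) * t := by simp only [hS.mul_assoc]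
  _ = t⁻¹ * (t * t⁻¹ * f * f) * t := by rw [hS.isIdem_comm hf (hS.isIdem_mul_inv t)]
  _ = t⁻¹ * t * t⁻¹ * (f * f * t) := by simp only [hS.mul_assoc]
  _ = t⁻¹ * f * t := by rw [hS.inv_mul_inv, hf, hS.mul_assoc]

theorem natLe_refl (hS : InvSemigroupZero S) (s : S) : natLe s s :=
  ⟨s⁻¹ * s, hS.isIdem_inv_mul s, by rw [← hS.mul_assoc, hS.mul_inv_mul]⟩

theorem natLe_trans (hS : InvSemigroupZero S) {s t u : S} (h₁ : natLe s t) (h₂ : natLe t u) :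
    natLe s u := by
  obtain ⟨e, he, rfl⟩ := h₁
  obtain ⟨f, hf, rfl⟩ := h₂
  exact ⟨f * e, hS.isIdem_mul hf he, hS.mul_assoc u f e⟩

theorem isIdem_of_natLe (hS : InvSemigroupZero S) {s e : S} (h : natLe s e) (he : IsIdem e) :
    IsIdem s := by
  obtain ⟨f, hf, rfl⟩ := h
  exact hS.isIdem_mul he hf

theorem mul_eq_of_natLe (hS : InvSemigroupZero S) {s e : S} (h : natLe s e) (he : IsIdem e) :
    e * s = s := by
  obtain ⟨f, -, rfl⟩ := h
  rw [← hS.mul_assoc, he]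

theorem natLe_of_eq_mul (hS : InvSemigroupZero S) {s t f : S} (hf : IsIdem f) (h : s = f * t) :
    natLe s t := by
  refine ⟨t⁻¹ * f * t, hS.isIdem_conj t hf, ?_⟩
  rw [h]
  symm
  calc t * (t⁻¹ * f * t) = t * t⁻¹ * f * t := by simp only [hS.mul_assoc]
    _ = f * (t * t⁻¹ * t) := by
        rw [hS.isIdem_comm (hS.isIdem_mul_inv t) hf]; simp only [hS.mul_assoc]
    _ = f * t := by rw [hS.mul_inv_mul]

theorem natLe_mul_left (hS : InvSemigroupZero S) {u v : S} (s : S) (h : natLe u v) :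
    natLe (s * u) (s * v) := by
  obtain ⟨e, he, rfl⟩ := h
  exact ⟨e, he, (hS.mul_assoc s v e).symm⟩

theorem natLe_inv (hS : InvSemigroupZero S) {s t : S} (h : natLe s t) : natLe s⁻¹ t⁻¹ := by
  obtain ⟨e, he, rfl⟩ := h
  exact hS.natLe_of_eq_mul he (by rw [hS.mul_inv_rev, hS.inv_eq_self_of_isIdem he])

theorem natLe_inv_iff (hS : InvSemigroupZero S) {s t : S} : natLe s⁻¹ t⁻¹ ↔ natLe s t :=
  ⟨fun h => by simpa only [hS.inv_inv] using hS.natLe_inv h, hS.natLe_inv⟩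

theorem natLe_mul_right (hS : InvSemigroupZero S) {s t : S} (u : S) (h : natLe s t) :
    natLe (s * u) (t * u) := by
  rw [← hS.natLe_inv_iff, hS.mul_inv_rev, hS.mul_inv_rev]
  exact hS.natLe_mul_left u⁻¹ (hS.natLe_inv h)

theorem natLe_mul (hS : InvSemigroupZero S) {s t u v : S} (h₁ : natLe s t) (h₂ : natLe u v) :
    natLe (s * u) (t * v) :=
  hS.natLe_trans (hS.natLe_mul_right u h₁) (hS.natLe_mul_left t h₂)

theorem eq_zero_of_natLe_zero (hS : InvSemigroupZero S) {s : S} (h : natLe s 0) : s = 0 := by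
  obtain ⟨e, -, rfl⟩ := h
  exact hS.zero_mul e

theorem subset_upc (hS : InvSemigroupZero S) (X : Set S) : X ⊆ upc X :=
  fun x hx => ⟨x, hx, hS.natLe_refl x⟩

theorem mulF_upc_left (hS : InvSemigroupZero S) (X Y : Set S) : mulF (upc X) Y = mulF X Y := by
  ext p
  simp only [mem_mulF]
  constructor
  · rintro ⟨_, ⟨a, ha, hle⟩, b, hb, hle'⟩
    exact ⟨a, ha, b, hb, hS.natLe_trans (hS.natLe_mul_right b hle) hle'⟩
  · rintro ⟨a, ha, b, hb, hle⟩
    exact ⟨a, hS.subset_upc X ha, b, hb, hle⟩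

theorem mulF_upc_right (hS : InvSemigroupZero S) (X Y : Set S) : mulF X (upc Y) = mulF X Y := by
  ext p
  simp only [mem_mulF]
  constructor
  · rintro ⟨a, ha, _, ⟨b, hb, hle⟩, hle'⟩
    exact ⟨a, ha, b, hb, hS.natLe_trans (hS.natLe_mul_left a hle) hle'⟩
  · rintro ⟨a, ha, b, hb, hle⟩
    exact ⟨a, ha, b, hS.subset_upc Y hb, hle⟩

theorem mulF_assoc (hS : InvSemigroupZero S) (X Y Z : Set S) :
    mulF (mulF X Y) Z = mulF X (mulF Y Z) := by
  conv_lhs => arg 1; rw [mulF]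
  conv_rhs => arg 2; rw [mulF]
  rw [hS.mulF_upc_left, hS.mulF_upc_right]
  ext p
  simp only [mem_mulF]
  constructor
  · rintro ⟨_, ⟨a, ha, b, hb, rfl⟩, c, hc, hle⟩
    exact ⟨a, ha, b * c, ⟨b, hb, c, hc, rfl⟩, by rwa [← hS.mul_assoc]⟩
  · rintro ⟨a, ha, _, ⟨b, hb, c, hc, rfl⟩, hle⟩
    exact ⟨a * b, ⟨a, ha, b, hb, rfl⟩, c, hc, by rwa [hS.mul_assoc]⟩

theorem mem_invF (hS : InvSemigroupZero S) {X : Set S} {p : S} : p ∈ invF X ↔ p⁻¹ ∈ X :=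
  ⟨by rintro ⟨x, hx, rfl⟩; rwa [hS.inv_inv], fun h => ⟨p⁻¹, h, hS.inv_inv p⟩⟩

theorem invF_invF (hS : InvSemigroupZero S) (X : Set S) : invF (invF X) = X := by
  ext p
  rw [hS.mem_invF, hS.mem_invF, hS.inv_inv]

theorem invF_upc (hS : InvSemigroupZero S) (X : Set S) : invF (upc X) = upc (invF X) := by
  ext p
  simp only [hS.mem_invF, upc, Set.mem_ofPred_eq]
  constructor
  · rintro ⟨x, hx, hle⟩
    exact ⟨x⁻¹, by rwa [hS.inv_inv], by rwa [← hS.natLe_inv_iff, hS.inv_inv]⟩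
  · rintro ⟨x, hx, hle⟩
    exact ⟨x⁻¹, hx, hS.natLe_inv hle⟩

theorem invF_mulF (hS : InvSemigroupZero S) (X Y : Set S) :
    invF (mulF X Y) = mulF (invF Y) (invF X) := by
  rw [mulF, mulF, hS.invF_upc]
  congr 1
  ext p
  simp only [hS.mem_invF, Set.mem_ofPred_eq]
  constructor
  · rintro ⟨a, ha, b, hb, hab⟩
    refine ⟨b⁻¹, by rwa [hS.inv_inv], a⁻¹, by rwa [hS.inv_inv], ?_⟩
    rw [← hS.mul_inv_rev, ← hab, hS.inv_inv]
  · rintro ⟨b, hb, a, ha, rfl⟩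
    exact ⟨a⁻¹, ha, b⁻¹, hb, hS.mul_inv_rev b a⟩

theorem dF_invF (hS : InvSemigroupZero S) (A : Set S) : dF (invF A) = rF A := by
  rw [dF_eq_mulF_invF, hS.invF_invF, rF_eq_mulF_invF]

theorem rF_invF (hS : InvSemigroupZero S) (A : Set S) : rF (invF A) = dF A := by
  rw [rF_eq_mulF_invF, hS.invF_invF, dF_eq_mulF_invF]

theorem invF_rF (hS : InvSemigroupZero S) (A : Set S) : invF (rF A) = rF A := by
  rw [rF_eq_mulF_invF, hS.invF_mulF, hS.invF_invF]

theorem exists_natLe_three (hS : InvSemigroupZero S) {A : Set S} (hA : IsFilt A) {a b c : S}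
    (ha : a ∈ A) (hb : b ∈ A) (hc : c ∈ A) :
    ∃ d ∈ A, natLe d a ∧ natLe d b ∧ natLe d c := by
  obtain ⟨d₁, hd₁, hd₁a, hd₁b⟩ := hA.2.2 a ha b hb
  obtain ⟨d, hd, hdd₁, hdc⟩ := hA.2.2 d₁ hd₁ c hc
  exact ⟨d, hd, hS.natLe_trans hdd₁ hd₁a, hS.natLe_trans hdd₁ hd₁b, hdc⟩

theorem isFilt_mulF (hS : InvSemigroupZero S) {A B : Set S} (hA : IsFilt A) (hB : IsFilt B) :
    IsFilt (mulF A B) := by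
  obtain ⟨⟨a₀, ha₀⟩, -, hdirA⟩ := hA
  obtain ⟨⟨b₀, hb₀⟩, -, hdirB⟩ := hB
  refine ⟨⟨a₀ * b₀, mem_mulF.2 ⟨a₀, ha₀, b₀, hb₀, hS.natLe_refl _⟩⟩, ?_, ?_⟩
  · rintro p ⟨q, hq, hle⟩ s hps
    exact ⟨q, hq, hS.natLe_trans hle hps⟩
  · intro p hp q hq
    obtain ⟨a₁, ha₁, b₁, hb₁, hle₁⟩ := mem_mulF.1 hp
    obtain ⟨a₂, ha₂, b₂, hb₂, hle₂⟩ := mem_mulF.1 hq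
    obtain ⟨a, ha, haa₁, haa₂⟩ := hdirA a₁ ha₁ a₂ ha₂
    obtain ⟨b, hb, hbb₁, hbb₂⟩ := hdirB b₁ hb₁ b₂ hb₂
    exact ⟨a * b, mem_mulF.2 ⟨a, ha, b, hb, hS.natLe_refl _⟩,
      hS.natLe_trans (hS.natLe_mul haa₁ hbb₁) hle₁, hS.natLe_trans (hS.natLe_mul haa₂ hbb₂) hle₂⟩

theorem isFilt_invF (hS : InvSemigroupZero S) {A : Set S} (hA : IsFilt A) : IsFilt (invF A) := by
  obtain ⟨⟨a₀, ha₀⟩, hup, hdir⟩ := hA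
  refine ⟨⟨a₀⁻¹, hS.mem_invF.2 (by rwa [hS.inv_inv])⟩, ?_, ?_⟩
  · intro a ha s has
    exact hS.mem_invF.2 (hup _ (hS.mem_invF.1 ha) _ (hS.natLe_inv has))
  · intro a ha b hb
    obtain ⟨c, hc, hca, hcb⟩ := hdir _ (hS.mem_invF.1 ha) _ (hS.mem_invF.1 hb)
    refine ⟨c⁻¹, ⟨c, hc, rfl⟩, ?_, ?_⟩
    · rwa [← hS.natLe_inv_iff, hS.inv_inv]
    · rwa [← hS.natLe_inv_iff, hS.inv_inv]

theorem isPFilt_invF (hS : InvSemigroupZero S) {A : Set S} (hA : IsPFilt A) :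
    IsPFilt (invF A) :=
  ⟨hS.isFilt_invF hA.1, by rw [hS.mem_invF, hS.inv_zero]; exact hA.2⟩

theorem mulF_dF (hS : InvSemigroupZero S) {A : Set S} (hA : IsFilt A) : mulF A (dF A) = A := by
  rw [dF, hS.mulF_upc_right]
  ext p
  rw [mem_mulF]
  constructor
  · rintro ⟨x, hx, _, ⟨b, hb, c, hc, rfl⟩, hle⟩
    obtain ⟨d, hd, hdx, hdb, hdc⟩ := hS.exists_natLe_three hA hx hb hc
    have hd_le : natLe (d * (d⁻¹ * d)) (x * (b⁻¹ * c)) :=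
      hS.natLe_mul hdx (hS.natLe_mul (hS.natLe_inv hdb) hdc)
    rw [← hS.mul_assoc, hS.mul_inv_mul] at hd_le
    exact hA.2.1 d hd p (hS.natLe_trans hd_le hle)
  · intro hp
    refine ⟨p, hp, p⁻¹ * p, ⟨p, hp, p, hp, rfl⟩, ?_⟩
    rw [← hS.mul_assoc, hS.mul_inv_mul]
    exact hS.natLe_refl p

theorem mulF_rF (hS : InvSemigroupZero S) {A : Set S} (hA : IsFilt A) : mulF (rF A) A = A :=
  calc mulF (rF A) A = invF (mulF (invF A) (dF (invF A))) := by
        rw [hS.invF_mulF, hS.dF_invF, hS.invF_rF, hS.invF_invF]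
    _ = A := by rw [hS.mulF_dF (hS.isFilt_invF hA), hS.invF_invF]

theorem dF_mulF (hS : InvSemigroupZero S) {A B : Set S} (hB : IsFilt B) (h : dF A = rF B) :
    dF (mulF A B) = dF B :=
  calc dF (mulF A B) = mulF (invF B) (mulF (mulF (invF A) A) B) := by
        rw [dF_eq_mulF_invF, hS.invF_mulF, hS.mulF_assoc, hS.mulF_assoc]
    _ = mulF (invF B) B := by rw [← dF_eq_mulF_invF, h, hS.mulF_rF hB]
    _ = dF B := (dF_eq_mulF_invF B).symm

theorem rF_mulF (hS : InvSemigroupZero S) {A B : Set S} (hA : IsFilt A) (h : dF A = rF B) :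
    rF (mulF A B) = rF A := by
  rw [← hS.dF_invF, hS.invF_mulF, ← hS.dF_invF,
    hS.dF_mulF (hS.isFilt_invF hA) (by rw [hS.dF_invF, hS.rF_invF, h])]

theorem eq_zero_of_natLe_inv_mul (hS : InvSemigroupZero S) {a w : S}
    (hw : natLe (w * w⁻¹) (a⁻¹ * a)) (haw : a * w = 0) : w = 0 :=
  calc w = w * w⁻¹ * w := (hS.mul_inv_mul w).symm
    _ = a⁻¹ * a * (w * w⁻¹) * w := by rw [hS.mul_eq_of_natLe hw (hS.isIdem_inv_mul a)]
    _ = a⁻¹ * (a * (w * w⁻¹ * w)) := by simp only [hS.mul_assoc]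
    _ = 0 := by rw [hS.mul_inv_mul, haw, hS.mul_zero]

/-- If `ab ≤ 0` then `a⁻¹a ∈ r(B)` lies above `ww⁻¹` for some `w ∈ B` below `b`; as `aw = 0`,
this forces `w = 0`. -/
theorem zero_notMem_mulF (hS : InvSemigroupZero S) {A B : Set S} (hB : IsPFilt B)
    (h : dF A = rF B) : (0 : S) ∉ mulF A B := by
  intro h0
  obtain ⟨a, ha, b, hb, hab⟩ := mem_mulF.1 h0
  have hda : a⁻¹ * a ∈ rF B := h ▸ ⟨_, ⟨a, ha, a, ha, rfl⟩, hS.natLe_refl _⟩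
  obtain ⟨_, ⟨b₁, hb₁, b₂, hb₂, rfl⟩, hle⟩ := hda
  obtain ⟨w, hw, hwb₁, hwb₂, hwb⟩ := hS.exists_natLe_three hB.1 hb₁ hb₂ hb
  have haw : a * w = 0 := hS.eq_zero_of_natLe_zero (hS.natLe_trans (hS.natLe_mul_left a hwb) hab)
  have hww : natLe (w * w⁻¹) (a⁻¹ * a) :=
    hS.natLe_trans (hS.natLe_mul hwb₁ (hS.natLe_inv hwb₂)) hle
  exact hB.2 (hS.eq_zero_of_natLe_inv_mul hww haw ▸ hw)

theorem isPFilt_mulF (hS : InvSemigroupZero S) {A B : Set S} (hA : IsFilt A) (hB : IsPFilt B)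
    (h : dF A = rF B) : IsPFilt (mulF A B) :=
  ⟨hS.isFilt_mulF hA hB.1, hS.zero_notMem_mulF hB h⟩

theorem exists_isIdem_natLe (hS : InvSemigroupZero S) {E : Set S} (hE : IsFilt E) {e : S}
    (heE : e ∈ E) (he : IsIdem e) {a b : S} (ha : a ∈ E) (hb : b ∈ E) :
    ∃ c ∈ E, IsIdem c ∧ natLe c a ∧ natLe c b := by
  obtain ⟨c, hc, hca, hcb, hce⟩ := hS.exists_natLe_three hE ha hb heE
  exact ⟨c, hc, hS.isIdem_of_natLe hce he, hca, hcb⟩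

theorem invF_eq_self_of_isIdem_mem (hS : InvSemigroupZero S) {E : Set S} (hE : IsFilt E)
    {e : S} (heE : e ∈ E) (he : IsIdem e) : invF E = E := by
  have inv_mem : ∀ x ∈ E, x⁻¹ ∈ E := fun x hx => by
    obtain ⟨c, hc, hcI, hcx, -⟩ := hS.exists_isIdem_natLe hE heE he hx hx
    have hcx' := hS.natLe_inv hcx
    rw [hS.inv_eq_self_of_isIdem hcI] at hcx'
    exact hE.2.1 c hc _ hcx'
  ext x
  rw [hS.mem_invF]
  exact ⟨fun h => hS.inv_inv x ▸ inv_mem _ h, inv_mem x⟩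

theorem mulF_self_of_isIdem_mem (hS : InvSemigroupZero S) {E : Set S} (hE : IsFilt E)
    {e : S} (heE : e ∈ E) (he : IsIdem e) : mulF E E = E := by
  ext p
  rw [mem_mulF]
  constructor
  · rintro ⟨a, ha, b, hb, hle⟩
    obtain ⟨c, hc, hcI, hca, hcb⟩ := hS.exists_isIdem_natLe hE heE he ha hb
    have hc_le := hS.natLe_mul hca hcb
    rw [hcI] at hc_le
    exact hE.2.1 c hc p (hS.natLe_trans hc_le hle)
  · intro hp
    obtain ⟨c, hc, hcI, hcp, -⟩ := hS.exists_isIdem_natLe hE heE he hp hp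
    exact ⟨c, hc, c, hc, by rwa [hcI]⟩

theorem exists_isIdem_mem_of_mulF_self (hS : InvSemigroupZero S) {E : Set S} (hE : IsFilt E)
    (hdr : dF E = rF E) (hEE : mulF E E = E) : ∃ e ∈ E, IsIdem e := by
  have hd : dF E = E :=
    calc dF E = mulF (invF E) (mulF E E) := by rw [hEE, dF_eq_mulF_invF]
      _ = mulF (rF E) E := by rw [← hS.mulF_assoc, ← dF_eq_mulF_invF, hdr]
      _ = E := hS.mulF_rF hE
  obtain ⟨a, ha⟩ := hE.1
  exact ⟨a⁻¹ * a, hd ▸ ⟨_, ⟨a, ha, a, ha, rfl⟩, hS.natLe_refl _⟩, hS.isIdem_inv_mul a⟩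

end InvSemigroupZero

/-- The proper filters of an inverse semigroup form a groupoid under
`A · B = (AB)↑`, defined when `d(A) = r(B)`: products of proper filters are
proper filters with the expected domain and range, multiplication is
associative where defined, `A⁻¹` is inverse to `A`, `d(A)` and `r(A)` act as
identities, and the identities are exactly the proper filters containing an
idempotent. -/
theorem proper_filters_form_groupoid {S : Type*} [Mul S] [Inv S] [Zero S]
    (hS : InvSemigroupZero S) :
    (∀ A B : Set S, IsPFilt A → IsPFilt B → dF A = rF B → IsPFilt (mulF A B)) ∧
    (∀ A B : Set S, IsPFilt A → IsPFilt B → dF A = rF B →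
      dF (mulF A B) = dF B ∧ rF (mulF A B) = rF A) ∧
    (∀ A B C : Set S, IsPFilt A → IsPFilt B → IsPFilt C →
      dF A = rF B → dF B = rF C → mulF (mulF A B) C = mulF A (mulF B C)) ∧
    (∀ A : Set S, IsPFilt A → IsPFilt (invF A) ∧ dF (invF A) = rF A ∧
      rF (invF A) = dF A ∧ mulF (invF A) A = dF A ∧ mulF A (invF A) = rF A) ∧
    (∀ A : Set S, IsPFilt A → mulF A (dF A) = A ∧ mulF (rF A) A = A) ∧
    (∀ E : Set S, IsPFilt E →
      ((dF E = rF E ∧ mulF E E = E) ↔ ∃ e ∈ E, IsIdem e)) := by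
  refine ⟨fun A B hA hB h => hS.isPFilt_mulF hA.1 hB h,
    fun A B hA hB h => ⟨hS.dF_mulF hB.1 h, hS.rF_mulF hA.1 h⟩,
    fun A B C _ _ _ _ _ => hS.mulF_assoc A B C,
    fun A hA => ⟨hS.isPFilt_invF hA, hS.dF_invF A, hS.rF_invF A,
      (dF_eq_mulF_invF A).symm, (rF_eq_mulF_invF A).symm⟩,
    fun A hA => ⟨hS.mulF_dF hA.1, hS.mulF_rF hA.1⟩,
    fun E hE => ⟨fun ⟨hdr, hEE⟩ => hS.exists_isIdem_mem_of_mulF_self hE.1 hdr hEE, ?_⟩⟩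
  rintro ⟨e, heE, he⟩
  rw [dF_eq_mulF_invF, rF_eq_mulF_invF, hS.invF_eq_self_of_isIdem_mem hE.1 heE he]
  exact ⟨rfl, hS.mulF_self_of_isIdem_mem hE.1 heE he⟩
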